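/- For τ > 0, the function x_d ↦ (m⁴ + 4m² + 1)/(m - 1)⁴ with m = e^{x_d/τ} is strictly decreasing in x_d on (0, ∞). Hence increasing the sampling spacing x_d strictly reduces the OCV noise amplification factor. -/

import Mathlib

/-!
Substituting `s = 1 / (m - 1)` turns `(m⁴ + 4m² + 1) / (m - 1)⁴` into a polynomial in `s` with
positive coefficients, which increases with `s ≥ 0`; and `s` decreases as `m = exp (x_d / τ)`
increases on `(1, ∞)`.
-/

open Real Set

def noiseQuartic (s : ℝ) : ℝ := 6 * s ^ 4 + 12 * s ^ 3 + 10 * s ^ 2 + 4 * s + 1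

lemma strictMonoOn_noiseQuartic : StrictMonoOn noiseQuartic (Ici 0) := by
  intro s hs t _ hst
  have hs : (0 : ℝ) ≤ s := hs
  unfold noiseQuartic
  gcongr

lemma quartic_ratio_eq_noiseQuartic {m : ℝ} (hm : m ≠ 1) :
    (m ^ 4 + 4 * m ^ 2 + 1) / (m - 1) ^ 4 = noiseQuartic (m - 1)⁻¹ := by
  have : m - 1 ≠ 0 := sub_ne_zero.mpr hm
  unfold noiseQuartic
  field_simp
  ring

lemma strictAntiOn_inv_sub_one : StrictAntiOn (fun m : ℝ => (m - 1)⁻¹) (Ioi 1) := by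
  intro a ha b _ hab
  have ha : (0 : ℝ) < a - 1 := sub_pos.mpr ha
  exact inv_strictAnti₀ ha (by linarith)

lemma strictAntiOn_quartic_ratio :
    StrictAntiOn (fun m : ℝ => (m ^ 4 + 4 * m ^ 2 + 1) / (m - 1) ^ 4) (Ioi 1) := by
  have hcomp := strictMonoOn_noiseQuartic.comp_strictAntiOn strictAntiOn_inv_sub_one
    fun m (hm : 1 < m) => (inv_pos.mpr (sub_pos.mpr hm)).le
  intro a ha b hb hab
  simpa only [Function.comp_apply, quartic_ratio_eq_noiseQuartic (ne_of_gt ha),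
    quartic_ratio_eq_noiseQuartic (ne_of_gt hb)] using hcomp ha hb hab

theorem noise_amplification_strictAnti_in_spacing (τ : ℝ) (hτ : 0 < τ) :
    StrictAntiOn
      (fun x_d : ℝ =>
        ((exp (x_d / τ))^4 + 4 * (exp (x_d / τ))^2 + 1) / (exp (x_d / τ) - 1)^4)
      (Set.Ioi 0) := by
  have hexp : StrictMono fun x : ℝ => exp (x / τ) :=
    exp_strictMono.comp fun x y hxy => div_lt_div_of_pos_right hxy hτ
  exact strictAntiOn_quartic_ratio.comp_strictMonoOn (hexp.strictMonoOn _)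
    fun x (hx : 0 < x) => one_lt_exp_iff.mpr (div_pos hx hτ)
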